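/- Let T > 0 and c ∈ ℝ. Let v : [0,T] → ℂ and g : [0,T] → ℂ be continuous, let θ : [0,T] → ℂ be twice continuously differentiable with θ'(T) = 0, and define w(t) = ∫_0^t e^{−ic(t−s)} v(s) ds. If θ satisfies the Volterra equation of the second kind θ'(t) + ∫_t^T e^{−ic(s−t)} ( θ(s) − i c θ'(s) ) ds = g(t) for all t ∈ [0,T], then ∫_0^T ( θ(t) w(t) + θ'(t) w'(t) ) dt = ∫_0^T g(s) v(s) ds. -/

import Mathlib

/-!
Write `Φ(t) = ∫_t^T e^{-ic(s-t)} (θ(s) - icθ'(s)) ds`, so that the Volterra equation reads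
`g = θ' + Φ` on `[0,T]`. Differentiating the exponential kernels gives `Φ' = icΦ - (θ - icθ')`
and `w' = v - icw`; with these, `(Φ w)' = g v - (θ w + θ' w')`. Integrating over `[0,T]`, the
boundary terms vanish because `Φ(T) = 0` and `w(0) = 0`.
-/

open Set Complex MeasureTheory

section FundamentalTheorem

variable {E : Type*} [NormedAddCommGroup E] [NormedSpace ℝ E] [CompleteSpace E]
  {a b t : ℝ} {f F : ℝ → E}

theorem hasDerivWithinAt_integral_Icc_right (hf : ContinuousOn f (Icc a b)) (ht : t ∈ Icc a b) :
    HasDerivWithinAt (fun u => ∫ x in a..u, f x) (f t) (Icc a b) t := by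
  have : Fact (t ∈ Icc a b) := ⟨ht⟩
  exact intervalIntegral.integral_hasDerivWithinAt_right
    ((hf.mono (Icc_subset_Icc le_rfl ht.2)).intervalIntegrable_of_Icc ht.1)
    (AEStronglyMeasurable.stronglyMeasurableAtFilter_of_mem
      (hf.aestronglyMeasurable measurableSet_Icc) self_mem_nhdsWithin)
    (hf t ht)

theorem hasDerivWithinAt_integral_Icc_left (hf : ContinuousOn f (Icc a b)) (ht : t ∈ Icc a b) :
    HasDerivWithinAt (fun u => ∫ x in u..b, f x) (-f t) (Icc a b) t := by
  have : Fact (t ∈ Icc a b) := ⟨ht⟩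
  exact intervalIntegral.integral_hasDerivWithinAt_left
    ((hf.mono (Icc_subset_Icc ht.1 le_rfl)).intervalIntegrable_of_Icc ht.2)
    (AEStronglyMeasurable.stronglyMeasurableAtFilter_of_mem
      (hf.aestronglyMeasurable measurableSet_Icc) self_mem_nhdsWithin)
    (hf t ht)

theorem integral_eq_sub_of_hasDerivWithinAt_Icc (hab : a ≤ b)
    (hF : ∀ x ∈ Icc a b, HasDerivWithinAt F (f x) (Icc a b) x)
    (hf : IntervalIntegrable f volume a b) :
    ∫ x in a..b, f x = F b - F a :=
  intervalIntegral.integral_eq_sub_of_hasDeriv_right_of_le hab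
    (fun x hx => (hF x hx).continuousWithinAt)
    (fun x hx => ((hF x (Ioo_subset_Icc_self hx)).hasDerivAt
      (Icc_mem_nhds hx.1 hx.2)).hasDerivWithinAt) hf

end FundamentalTheorem

section ExponentialKernel

variable {a b t : ℝ} {f : ℝ → ℂ}

theorem exp_neg_mul_sub (k x y : ℂ) : exp (-(k * (x - y))) = exp (-(k * x)) * exp (k * y) := by
  rw [← exp_add]
  ring_nf

theorem hasDerivAt_exp_mul_ofReal (k : ℂ) (t : ℝ) :
    HasDerivAt (fun x : ℝ => exp (k * x)) (k * exp (k * t)) t := by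
  simpa [mul_comm] using ((hasDerivAt_id t).ofReal_comp.const_mul k).cexp

theorem hasDerivWithinAt_expKernel_integral_right (k : ℂ) (hf : ContinuousOn f (Icc a b))
    (ht : t ∈ Icc a b) :
    HasDerivWithinAt (fun u : ℝ => ∫ s in a..u, exp (-(k * ((u : ℂ) - (s : ℂ)))) * f s)
      (f t - k * ∫ s in a..t, exp (-(k * ((t : ℂ) - (s : ℂ)))) * f s) (Icc a b) t := by
  have hfactor : ∀ u : ℝ, ∫ s in a..u, exp (-(k * ((u : ℂ) - (s : ℂ)))) * f s
      = exp (-k * u) * ∫ s in a..u, exp (k * s) * f s := fun u => by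
    simp_rw [exp_neg_mul_sub, mul_assoc, neg_mul]
    exact intervalIntegral.integral_const_mul _ _
  simp_rw [hfactor]
  have hinner : HasDerivWithinAt (fun u => ∫ s in a..u, exp (k * s) * f s)
      (exp (k * t) * f t) (Icc a b) t :=
    hasDerivWithinAt_integral_Icc_right ((by fun_prop : Continuous _).continuousOn.mul hf) ht
  refine ((hasDerivAt_exp_mul_ofReal (-k) t).hasDerivWithinAt.mul hinner).congr_deriv ?_
  rw [← mul_assoc, ← exp_add, ← add_mul, neg_add_cancel, zero_mul, exp_zero]
  ring

theorem hasDerivWithinAt_expKernel_integral_left (k : ℂ) (hf : ContinuousOn f (Icc a b))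
    (ht : t ∈ Icc a b) :
    HasDerivWithinAt (fun u : ℝ => ∫ s in u..b, exp (-(k * ((s : ℂ) - (u : ℂ)))) * f s)
      (k * (∫ s in t..b, exp (-(k * ((s : ℂ) - (t : ℂ)))) * f s) - f t) (Icc a b) t := by
  have hfactor : ∀ u : ℝ, ∫ s in u..b, exp (-(k * ((s : ℂ) - (u : ℂ)))) * f s
      = exp (k * u) * ∫ s in u..b, exp (-(k * s)) * f s := fun u => by
    simp_rw [exp_neg_mul_sub, mul_comm _ (exp (k * u)), mul_assoc]
    exact intervalIntegral.integral_const_mul _ _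
  simp_rw [hfactor]
  have hinner : HasDerivWithinAt (fun u => ∫ s in u..b, exp (-(k * s)) * f s)
      (-(exp (-(k * t)) * f t)) (Icc a b) t :=
    hasDerivWithinAt_integral_Icc_left ((by fun_prop : Continuous _).continuousOn.mul hf) ht
  refine ((hasDerivAt_exp_mul_ofReal k t).hasDerivWithinAt.mul hinner).congr_deriv ?_
  rw [mul_neg, ← mul_assoc, ← exp_add, add_neg_cancel, exp_zero]
  ring

end ExponentialKernel

theorem averaging_reduces_to_data_general
    (T : ℝ) (hT : 0 < T) (c : ℝ) (v g θ θ' θ'' w w' : ℝ → ℂ)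
    (hv : ContinuousOn v (Icc 0 T))
    (hg : ContinuousOn g (Icc 0 T))
    (hθ : ∀ t ∈ Icc (0 : ℝ) T, HasDerivWithinAt θ (θ' t) (Icc 0 T) t)
    (hθ' : ∀ t ∈ Icc (0 : ℝ) T, HasDerivWithinAt θ' (θ'' t) (Icc 0 T) t)
    (hw : ∀ t, w t = ∫ s in (0 : ℝ)..t,
      Complex.exp (-(Complex.I * (c : ℂ) * ((t : ℂ) - (s : ℂ)))) * v s)
    (hw' : ∀ t ∈ Icc (0 : ℝ) T, HasDerivWithinAt w (w' t) (Icc 0 T) t)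
    (hvolt : ∀ t ∈ Icc (0 : ℝ) T,
      θ' t + ∫ s in t..T,
        Complex.exp (-(Complex.I * (c : ℂ) * ((s : ℂ) - (t : ℂ)))) *
          (θ s - Complex.I * (c : ℂ) * θ' s) = g t) :
    (∫ t in (0 : ℝ)..T, (θ t * w t + θ' t * w' t))
      = ∫ s in (0 : ℝ)..T, g s * v s := by
  have hθc : ContinuousOn θ (Icc 0 T) := fun t ht => (hθ t ht).continuousWithinAt
  have hθ'c : ContinuousOn θ' (Icc 0 T) := fun t ht => (hθ' t ht).continuousWithinAt
  have hwc : ContinuousOn w (Icc 0 T) := fun t ht => (hw' t ht).continuousWithinAt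
  have hw'_eq : ∀ t ∈ Icc 0 T, w' t = v t - I * c * w t := fun t ht => by
    have hderiv := hasDerivWithinAt_expKernel_integral_right (I * c) hv ht
    rw [← funext hw, ← hw t] at hderiv
    exact (uniqueDiffOn_Icc hT t ht).eq_deriv _ (hw' t ht) hderiv
  set Φ : ℝ → ℂ := fun t => ∫ s in t..T, exp (-(I * c * ((s : ℂ) - (t : ℂ)))) *
    (θ s - I * c * θ' s)
  have hΦ' : ∀ t ∈ Icc 0 T, HasDerivWithinAt Φ (I * c * Φ t - (θ t - I * c * θ' t)) (Icc 0 T) t :=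
    fun t ht => hasDerivWithinAt_expKernel_integral_left (I * c)
      (hθc.sub (continuousOn_const.mul hθ'c)) ht
  have hprod : ∀ t ∈ Icc 0 T, HasDerivWithinAt (fun u => Φ u * w u)
      (g t * v t - (θ t * w t + θ' t * w' t)) (Icc 0 T) t := fun t ht => by
    refine ((hΦ' t ht).mul (hw' t ht)).congr_deriv ?_
    rw [← hvolt t ht, hw'_eq t ht]
    ring
  have hgv : IntervalIntegrable (fun t => g t * v t) volume 0 T :=
    (hg.mul hv).intervalIntegrable_of_Icc hT.le
  have hθw : IntervalIntegrable (fun t => θ t * w t + θ' t * w' t) volume 0 T :=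
    ContinuousOn.intervalIntegrable_of_Icc hT.le
      ((hθc.mul hwc).add (hθ'c.mul ((hv.sub (continuousOn_const.mul hwc)).congr hw'_eq)))
  have hboundary := integral_eq_sub_of_hasDerivWithinAt_Icc hT.le hprod (hgv.sub hθw)
  have hΦT : Φ T = 0 := intervalIntegral.integral_same
  have hw0 : w 0 = 0 := (hw 0).trans intervalIntegral.integral_same
  rw [intervalIntegral.integral_sub hgv hθw, hΦT, hw0, zero_mul, mul_zero, sub_zero,
    sub_eq_zero] at hboundary
  exact hboundary.symm

/-- The key averaging identity: if `θ` is twice continuously differentiable on `[0,T]`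
with `θ'(T) = 0` and satisfies the Volterra equation of the second kind
`θ'(t) + ∫_t^T e^{-ic(s-t)} (θ(s) - i c θ'(s)) ds = g(t)`, and
`w(t) = ∫_0^t e^{-ic(t-s)} v(s) ds`, then
`∫_0^T (θ w + θ' w') dt = ∫_0^T g(s) v(s) ds`. -/
theorem averaging_reduces_to_data
    (T : ℝ) (hT : 0 < T) (c : ℝ) (v g θ θ' θ'' w w' : ℝ → ℂ)
    (hv : ContinuousOn v (Icc 0 T))
    (hg : ContinuousOn g (Icc 0 T))
    (hθ : ∀ t ∈ Icc (0 : ℝ) T, HasDerivWithinAt θ (θ' t) (Icc 0 T) t)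
    (hθ' : ∀ t ∈ Icc (0 : ℝ) T, HasDerivWithinAt θ' (θ'' t) (Icc 0 T) t)
    (hθ'' : ContinuousOn θ'' (Icc 0 T))
    (hθT : θ' T = 0)
    (hw : ∀ t, w t = ∫ s in (0 : ℝ)..t,
      Complex.exp (-(Complex.I * (c : ℂ) * ((t : ℂ) - (s : ℂ)))) * v s)
    (hw' : ∀ t ∈ Icc (0 : ℝ) T, HasDerivWithinAt w (w' t) (Icc 0 T) t)
    (hvolt : ∀ t ∈ Icc (0 : ℝ) T,
      θ' t + ∫ s in t..T,
        Complex.exp (-(Complex.I * (c : ℂ) * ((s : ℂ) - (t : ℂ)))) *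
          (θ s - Complex.I * (c : ℂ) * θ' s) = g t) :
    (∫ t in (0 : ℝ)..T, (θ t * w t + θ' t * w' t))
      = ∫ s in (0 : ℝ)..T, g s * v s :=
  averaging_reduces_to_data_general T hT c v g θ θ' θ'' w w' hv hg hθ hθ' hw hw' hvolt
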